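/- arXiv:2309.07280 — 7 statements merged into one kernel-verified Lean document; each statement's English description precedes it below -/
import Mathlib

section
/- For every nonnegative integer t, the rational number 2/(1 + 4t) has odd greedy expansion of length exactly 2; specifically, its odd greedy expansion is 1/(1+2t) + 1/((1+2t)(1+4t)). -/
/-- `a` is the denominator chosen by the odd greedy algorithm for remainder `q`:
`a = 1` if `q ≥ 1`, and otherwise `a` is the odd integer with `1/a ≤ q < 1/(a-2)`. -/
def IsOddGreedyStep (q : ℚ) (a : ℕ) : Prop :=
  Odd a ∧ ((a = 1 ∧ 1 ≤ q) ∨ (3 ≤ a ∧ (1 : ℚ) / a ≤ q ∧ q < 1 / ((a : ℚ) - 2)))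

/-- `x 0, …, x (m-1)` are the denominators of the odd greedy expansion of `q`,
which thus has length exactly `m`. -/
def IsOddGreedyExpansion (m : ℕ) (x : ℕ → ℕ) (q : ℚ) : Prop :=
  q = ∑ i ∈ Finset.range m, (1 : ℚ) / (x i) ∧
    ∀ i < m, IsOddGreedyStep (q - ∑ j ∈ Finset.range i, (1 : ℚ) / (x j)) (x i)

/- The first greedy step takes `1/(1+2t)`, which leaves the unit fraction
`2/(1+4t) - 1/(1+2t) = 1/((1+2t)(1+4t))` with odd denominator; a unit fraction with odd
denominator is always taken in one greedy step. -/

theorem isOddGreedyStep_one_div {a : ℕ} (ha : Odd a) : IsOddGreedyStep (1 / a) a := by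
  refine ⟨ha, ?_⟩
  obtain rfl | h3 : a = 1 ∨ 3 ≤ a := by obtain ⟨k, rfl⟩ := ha; omega
  · exact Or.inl ⟨rfl, by norm_num⟩
  · have h2 : (0 : ℚ) < a - 2 := by
      have : (3 : ℚ) ≤ a := by exact_mod_cast h3
      linarith
    exact Or.inr ⟨h3, le_rfl, one_div_lt_one_div_of_lt h2 (by linarith)⟩

theorem isOddGreedyStep_two_div (t : ℕ) :
    IsOddGreedyStep (2 / (1 + 4 * t)) (1 + 2 * t) := by
  refine ⟨⟨t, by ring⟩, ?_⟩
  rcases Nat.eq_zero_or_pos t with rfl | ht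
  · exact Or.inl ⟨rfl, by norm_num⟩
  · have ht : (1 : ℚ) ≤ t := by exact_mod_cast ht
    refine Or.inr ⟨by omega, ?_, ?_⟩
    · rw [div_le_div_iff₀ (by positivity) (by positivity)]
      push_cast
      linarith
    · rw [div_lt_div_iff₀ (by positivity) (by push_cast; linarith)]
      push_cast
      linarith

theorem IsOddGreedyExpansion.of_two {x : ℕ → ℕ} {q : ℚ} (hq : q = 1 / x 0 + 1 / x 1)
    (h₀ : IsOddGreedyStep q (x 0)) (h₁ : IsOddGreedyStep (q - 1 / x 0) (x 1)) :
    IsOddGreedyExpansion 2 x q := by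
  refine ⟨by simpa [Finset.sum_range_succ] using hq, fun i hi => ?_⟩
  interval_cases i
  · simpa using h₀
  · simpa using h₁

/-- for every nonnegative integer `t`, the odd greedy expansion of
`2/(1+4t)` has length exactly `2`, namely `1/(1+2t) + 1/((1+2t)(1+4t))`. -/
theorem stmt_5 (t : ℕ) :
    IsOddGreedyExpansion 2 (fun i => if i = 0 then 1 + 2 * t else (1 + 2 * t) * (1 + 4 * t))
      (2 / (1 + 4 * (t : ℚ))) := by
  have hrem : 2 / (1 + 4 * (t : ℚ)) - 1 / ((1 + 2 * t : ℕ) : ℚ) =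
      1 / (((1 + 2 * t) * (1 + 4 * t) : ℕ) : ℚ) := by
    push_cast
    field_simp
    ring
  have hodd : Odd ((1 + 2 * t) * (1 + 4 * t)) := ⟨4 * t ^ 2 + 3 * t, by ring⟩
  refine .of_two (by simp only [if_pos, one_ne_zero, if_false]; linarith) ?_ ?_
  · simpa using isOddGreedyStep_two_div t
  · simp only [if_pos, one_ne_zero, if_false]
    rw [hrem]
    exact isOddGreedyStep_one_div hodd
end

section
/- Let m be a positive integer and x_1,...,x_m odd positive integers. Then x_1,...,x_m are the denominators of the odd greedy expansion of ∑_{j=1}^m 1/x_j if and only if for all positive integers i, k with i ≤ k ≤ m one has 2·σ_{k−i}(x_i,...,x_k) > x_i²·σ_{k−i−1}(x_{i+1},...,x_k). -/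
/-- The elementary symmetric polynomial of (integer) degree `d` in the variables
`f j` for `j ∈ s`, with value `0` for negative `d` (and `1` for `d = 0`). -/
def esymZ (s : Finset ℕ) (f : ℕ → ℤ) (d : ℤ) : ℤ :=
  if d < 0 then 0 else ∑ u ∈ s.powersetCard d.toNat, ∏ j ∈ u, f j


/-!
Dividing by `x_i ⋯ x_k` and using `σ_{n-1}(y_1,…,y_n) = y_1 ⋯ y_n · ∑ 1/y_j`, the inequality
for `(i, k)` becomes `(x_i - 2) · ∑_{j=i}^{k} 1/x_j < 1`. For the remainder
`q = ∑_{j ≥ i} 1/x_j ≥ 1/x_i`, the odd greedy algorithm picks the odd number `x_i` exactly when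
`(x_i - 2) · q < 1`, which is the case `k = m`; the cases `k < m` follow because the partial sums
are smaller (and the left side is `≤ 0` when `x_i = 1`).
-/

open Finset

lemma Finset.powersetCard_card_sub_one {α : Type*} [DecidableEq α] {s : Finset α}
    (hs : s.Nonempty) : s.powersetCard (#s - 1) = s.image s.erase := by
  have hcard : 0 < #s := hs.card_pos
  ext u
  simp only [mem_powersetCard, mem_image]
  constructor
  · rintro ⟨hus, hu⟩
    obtain ⟨j, hj⟩ : ∃ j, s \ u = {j} := card_eq_one.mp (by rw [card_sdiff_of_subset hus]; omega)
    have hjs : j ∈ s := (mem_sdiff.mp (hj ▸ mem_singleton_self j)).1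
    exact ⟨j, hjs, by rw [erase_eq, ← hj, sdiff_sdiff_eq_self hus]⟩
  · rintro ⟨j, hj, rfl⟩
    exact ⟨erase_subset j s, card_erase_of_mem hj⟩

lemma esymZ_card_sub_one (s : Finset ℕ) (f : ℕ → ℤ) :
    esymZ s f (#s - 1) = ∑ j ∈ s, ∏ l ∈ s.erase j, f l := by
  rcases s.eq_empty_or_nonempty with rfl | hs
  · simp [esymZ]
  have hcard : 0 < #s := hs.card_pos
  rw [esymZ, if_neg (by omega), show ((#s : ℤ) - 1).toNat = #s - 1 by omega,
    powersetCard_card_sub_one hs, sum_image (erase_injOn s)]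

lemma esymZ_card_sub_one_cast {K : Type*} [Field K] (s : Finset ℕ) (f : ℕ → ℤ)
    (hf : ∀ j ∈ s, (f j : K) ≠ 0) :
    (esymZ s f (#s - 1) : K) = (∏ j ∈ s, (f j : K)) * ∑ j ∈ s, 1 / (f j : K) := by
  rw [esymZ_card_sub_one, mul_sum]
  push_cast
  refine sum_congr rfl fun j hj => ?_
  rw [← prod_erase_mul s _ hj, mul_one_div, mul_div_cancel_right₀ _ (hf j hj)]

lemma esymZ_insert_lt_iff {K : Type*} [Field K] [LinearOrder K] [IsStrictOrderedRing K]
    {s : Finset ℕ} {a : ℕ} (ha : a ∉ s) {f : ℕ → ℤ} (hf : ∀ j ∈ insert a s, 0 < f j) :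
    f a ^ 2 * esymZ s f (#s - 1) < 2 * esymZ (insert a s) f #s ↔
      ((f a : K) - 2) * ∑ j ∈ insert a s, 1 / (f j : K) < 1 := by
  have hfK : ∀ j ∈ insert a s, (0 : K) < f j := fun j hj => Int.cast_pos.mpr (hf j hj)
  have hdeg : (#s : ℤ) = #(insert a s) - 1 := by rw [card_insert_of_notMem ha]; push_cast; ring
  rw [← Int.cast_lt (R := K)]
  push_cast
  nth_rw 2 [hdeg]
  rw [esymZ_card_sub_one_cast _ _ fun j hj => (hfK j (mem_insert_of_mem hj)).ne',
    esymZ_card_sub_one_cast _ _ fun j hj => (hfK j hj).ne', prod_insert ha, sum_insert ha]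
  have hc : (0 : K) < f a := hfK a (mem_insert_self a s)
  have hP : (0 : K) < ∏ j ∈ s, (f j : K) := prod_pos fun j hj => hfK j (mem_insert_of_mem hj)
  set c : K := (f a : K)
  set P := ∏ j ∈ s, (f j : K)
  set S := ∑ j ∈ s, 1 / (f j : K)
  have key :
      2 * (c * P * (1 / c + S)) - c ^ 2 * (P * S) = c * P * (1 - (c - 2) * (1 / c + S)) := by
    field_simp
    ring
  rw [← sub_pos, key, mul_pos_iff_of_pos_left (mul_pos hc hP), sub_pos]

lemma esymZ_Icc_lt_iff (x : ℕ → ℕ) {i k : ℕ} (hik : i ≤ k) (hx : ∀ j ∈ Icc i k, 0 < x j) :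
    (x i : ℤ) ^ 2 * esymZ (Icc (i + 1) k) (fun j => (x j : ℤ)) ((k : ℤ) - i - 1) <
        2 * esymZ (Icc i k) (fun j => (x j : ℤ)) ((k : ℤ) - i) ↔
      ((x i : ℚ) - 2) * ∑ j ∈ Icc i k, 1 / (x j : ℚ) < 1 := by
  have hins : insert i (Icc (i + 1) k) = Icc i k := insert_Icc_add_one_left_eq_Icc hik
  have hcard : (#(Icc (i + 1) k) : ℤ) = k - i := by rw [Nat.card_Icc]; omega
  have h := esymZ_insert_lt_iff (K := ℚ) (a := i) (s := Icc (i + 1) k)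
    (f := fun j => (x j : ℤ)) (by simp) (by rw [hins]; intro j hj; exact_mod_cast hx j hj)
  rw [hins, hcard] at h
  simpa only [Int.cast_natCast, sub_sub] using h

lemma isOddGreedyStep_iff {q : ℚ} {a : ℕ} (ha : Odd a) (hq : 1 / (a : ℚ) ≤ q) :
    IsOddGreedyStep q a ↔ ((a : ℚ) - 2) * q < 1 := by
  obtain rfl | h3 : a = 1 ∨ 3 ≤ a := by rcases ha with ⟨n, rfl⟩; omega
  · norm_num [IsOddGreedyStep] at hq ⊢
    constructor <;> intro <;> linarith
  · have h2 : (0 : ℚ) < a - 2 := by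
      have : (3 : ℚ) ≤ a := by exact_mod_cast h3
      linarith
    simp only [IsOddGreedyStep, ha, h3, hq, lt_div_iff₀ h2, true_and, mul_comm q,
      show a ≠ 1 by omega, false_and, false_or]

lemma isOddGreedyExpansion_sum_iff {m : ℕ} {x : ℕ → ℕ} (hx : ∀ i < m, Odd (x i)) :
    IsOddGreedyExpansion m x (∑ i ∈ range m, (1 : ℚ) / (x i)) ↔
      ∀ i < m, ((x i : ℚ) - 2) * ∑ j ∈ Ico i m, (1 : ℚ) / (x j) < 1 := by
  simp only [IsOddGreedyExpansion, true_and]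
  refine forall₂_congr fun i hi => ?_
  rw [← sum_Ico_eq_sub _ hi.le, isOddGreedyStep_iff (hx i hi)]
  exact single_le_sum (f := fun j => (1 : ℚ) / x j) (fun j _ => by positivity)
    (mem_Ico.mpr ⟨le_rfl, hi⟩)

lemma mul_sum_lt_one_of_subset {ι K : Type*} [Ring K] [LinearOrder K] [IsStrictOrderedRing K]
    {s t : Finset ι} (hts : t ⊆ s) {g : ι → K} (hg : ∀ j ∈ s, 0 ≤ g j) {c : K}
    (h : c * ∑ j ∈ s, g j < 1) : c * ∑ j ∈ t, g j < 1 := by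
  rcases le_or_gt 0 c with hc | hc
  · exact (mul_le_mul_of_nonneg_left (sum_le_sum_of_subset_of_nonneg hts fun j hj _ => hg j hj)
      hc).trans_lt h
  · exact (mul_nonpos_of_nonpos_of_nonneg hc.le (sum_nonneg fun j hj => hg j (hts hj))).trans_lt
      one_pos

theorem stmt_6_general (m : ℕ) (x : ℕ → ℕ)
    (hx : ∀ i < m, Odd (x i) ∧ 0 < x i) :
    IsOddGreedyExpansion m x (∑ i ∈ Finset.range m, (1 : ℚ) / (x i)) ↔
      ∀ i k : ℕ, i ≤ k → k < m →
        2 * esymZ (Finset.Icc i k) (fun j => (x j : ℤ)) ((k : ℤ) - i) >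
          (x i : ℤ) ^ 2 * esymZ (Finset.Icc (i + 1) k) (fun j => (x j : ℤ)) ((k : ℤ) - i - 1) := by
  have hpos : ∀ {i k}, k < m → ∀ j ∈ Icc i k, 0 < x j := fun hk j hj =>
    (hx j ((mem_Icc.mp hj).2.trans_lt hk)).2
  rw [isOddGreedyExpansion_sum_iff fun i hi => (hx i hi).1]
  constructor
  · intro h i k hik hkm
    rw [gt_iff_lt, esymZ_Icc_lt_iff x hik (hpos hkm)]
    exact mul_sum_lt_one_of_subset (Icc_subset_Ico_right hkm) (fun j _ => by positivity)
      (h i (hik.trans_lt hkm))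
  · intro h i hi
    have hm : m - 1 < m := by omega
    have hlast := h i (m - 1) (by omega) hm
    rwa [gt_iff_lt, esymZ_Icc_lt_iff x (by omega) (hpos hm),
      Icc_sub_one_right_eq_Ico_of_not_isMin (by simpa using hi.ne_bot)] at hlast

/-- indices shifted to be 0-based: odd positive `x 0, …, x (m-1)` are the
denominators of the odd greedy expansion of the sum of their reciprocals iff
`2·σ_{k−i}(x i,…,x k) > (x i)²·σ_{k−i−1}(x (i+1),…,x k)` for all `i ≤ k < m`. -/
theorem stmt_6 (m : ℕ) (hm : 0 < m) (x : ℕ → ℕ)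
    (hx : ∀ i < m, Odd (x i) ∧ 0 < x i) :
    IsOddGreedyExpansion m x (∑ i ∈ Finset.range m, (1 : ℚ) / (x i)) ↔
      ∀ i k : ℕ, i ≤ k → k < m →
        2 * esymZ (Finset.Icc i k) (fun j => (x j : ℤ)) ((k : ℤ) - i) >
          (x i : ℤ) ^ 2 * esymZ (Finset.Icc (i + 1) k) (fun j => (x j : ℤ)) ((k : ℤ) - i - 1) :=
  stmt_6_general m x hx
end

section
/- Let m be a positive integer and x_1,...,x_m odd positive integers. The inequalities 2·σ_{k−i}(x_i,...,x_k) > x_i²·σ_{k−i−1}(x_{i+1},...,x_k) for all 1 ≤ i ≤ k ≤ m hold if and only if for all 1 ≤ i < k ≤ m one has x_k > (x_i − 2)·x_i⋯x_{k−1} / (2·σ_{k−i−1}(x_i,...,x_{k−1}) − x_i²·σ_{k−i−2}(x_{i+1},...,x_{k−1})), where in the latter condition the denominators are positive. -/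
/-!
Write `D(i, k) = 2 σ_{k-i}(x_i, …, x_k) - x_i² σ_{k-i-1}(x_{i+1}, …, x_k)`. Splitting off the
last variable (`σ_d(S ∪ {y}) = σ_d(S) + y σ_{d-1}(S)`) and noting that the top-degree terms are
products gives `D(i, k) = x_k D(i, k-1) - (x_i - 2) x_i ⋯ x_{k-1}`, while `D(i, i) = 2`. So once
`D(i, k-1) > 0`, positivity of `D(i, k)` is exactly the stated lower bound on `x_k`.
-/

open Finset

theorem Multiset.esymm_cons_succ {R : Type*} [CommSemiring R] (a : R) (s : Multiset R) (n : ℕ) :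
    (a ::ₘ s).esymm (n + 1) = s.esymm (n + 1) + a * s.esymm n := by
  simp [Multiset.esymm, Multiset.sum_map_mul_left]

namespace esymZ

variable {s : Finset ℕ} {f : ℕ → ℤ}

lemma of_neg {d : ℤ} (hd : d < 0) : esymZ s f d = 0 := if_pos hd

lemma eq_esymm (n : ℕ) : esymZ s f n = (s.val.map f).esymm n := by
  simp [esymZ, Finset.esymm_map_val]

@[simp] lemma zero : esymZ s f 0 = 1 := by
  simp [esymZ]

lemma of_card {d : ℤ} (hd : #s = d) : esymZ s f d = ∏ j ∈ s, f j := by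
  simp [esymZ, ← hd, powersetCard_self]

lemma insert {a : ℕ} (ha : a ∉ s) (d : ℤ) :
    esymZ (insert a s) f d = esymZ s f d + f a * esymZ s f (d - 1) := by
  obtain hd | ⟨n, rfl⟩ := lt_or_ge d 0 |>.imp id Int.eq_ofNat_of_zero_le
  · simp [of_neg hd, of_neg (show d - 1 < 0 by omega)]
  cases n with
  | zero => simp [of_neg (show (-1 : ℤ) < 0 by omega)]
  | succ n =>
    rw [show ((n + 1 : ℕ) : ℤ) - 1 = n by omega, eq_esymm, eq_esymm, eq_esymm,
      insert_val_of_notMem ha, Multiset.map_cons, Multiset.esymm_cons_succ]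

end esymZ

def esymDefect (f : ℕ → ℤ) (i k : ℕ) : ℤ :=
  2 * esymZ (Icc i k) f (k - i) - f i ^ 2 * esymZ (Icc (i + 1) k) f (k - i - 1)

section esymDefect

variable {f : ℕ → ℤ} {i k : ℕ}

lemma esymDefect_self : esymDefect f i i = 2 := by
  simp [esymDefect, esymZ.of_neg (show (-1 : ℤ) < 0 by omega)]

lemma esymDefect_sub_one (hik : i < k) :
    esymDefect f i (k - 1) =
      2 * esymZ (Icc i (k - 1)) f (k - i - 1) - f i ^ 2 * esymZ (Icc (i + 1) (k - 1)) f (k - i - 2) := by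
  rw [esymDefect, Nat.cast_sub (by omega), Nat.cast_one]
  ring_nf

lemma esymDefect_eq (hik : i < k) :
    esymDefect f i k = f k * esymDefect f i (k - 1) - (f i - 2) * ∏ j ∈ Icc i (k - 1), f j := by
  have hk : k ∉ Icc i (k - 1) := by simp only [mem_Icc]; omega
  have hk' : k ∉ Icc (i + 1) (k - 1) := by simp only [mem_Icc]; omega
  have hprod : ∏ j ∈ Icc i (k - 1), f j = f i * ∏ j ∈ Icc (i + 1) (k - 1), f j := by
    rw [← insert_Icc_add_one_left_eq_Icc (by omega : i ≤ k - 1), prod_insert (by simp)]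
  have htop : esymZ (Icc i (k - 1)) f (k - i) = ∏ j ∈ Icc i (k - 1), f j :=
    esymZ.of_card (by rw [Nat.card_Icc]; omega)
  have htop' : esymZ (Icc (i + 1) (k - 1)) f (k - i - 1) = ∏ j ∈ Icc (i + 1) (k - 1), f j :=
    esymZ.of_card (by rw [Nat.card_Icc]; omega)
  rw [esymDefect_sub_one hik, esymDefect, ← insert_Icc_sub_one_right_eq_Icc hik.le,
    ← insert_Icc_sub_one_right_eq_Icc (show i + 1 ≤ k by omega), esymZ.insert hk, esymZ.insert hk',
    htop, htop', hprod, show (k : ℤ) - i - 1 - 1 = k - i - 2 by ring]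
  ring

lemma esymDefect_pos_iff_div_lt (hik : i < k) (hD : 0 < esymDefect f i (k - 1)) :
    0 < esymDefect f i k ↔
      ((f i - 2) * ∏ j ∈ Icc i (k - 1), f j : ℚ) / esymDefect f i (k - 1) < f k := by
  rw [esymDefect_eq hik, sub_pos, div_lt_iff₀ (by exact_mod_cast hD)]
  norm_cast

end esymDefect

theorem stmt_7_general (m : ℕ) (x : ℕ → ℕ) :
    (∀ i k : ℕ, i ≤ k → k < m →
        2 * esymZ (Finset.Icc i k) (fun j => (x j : ℤ)) ((k : ℤ) - i) >
          (x i : ℤ) ^ 2 * esymZ (Finset.Icc (i + 1) k) (fun j => (x j : ℤ)) ((k : ℤ) - i - 1)) ↔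
      (∀ i k : ℕ, i < k → k < m →
        0 < 2 * esymZ (Finset.Icc i (k - 1)) (fun j => (x j : ℤ)) ((k : ℤ) - i - 1) -
            (x i : ℤ) ^ 2 * esymZ (Finset.Icc (i + 1) (k - 1)) (fun j => (x j : ℤ)) ((k : ℤ) - i - 2) ∧
        (x k : ℚ) >
          (((x i : ℚ) - 2) * ∏ j ∈ Finset.Icc i (k - 1), (x j : ℚ)) /
            ((2 * esymZ (Finset.Icc i (k - 1)) (fun j => (x j : ℤ)) ((k : ℤ) - i - 1) -
              (x i : ℤ) ^ 2 * esymZ (Finset.Icc (i + 1) (k - 1)) (fun j => (x j : ℤ))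
                ((k : ℤ) - i - 2) : ℤ) : ℚ)) := by
  set f : ℕ → ℤ := fun j => (x j : ℤ)
  have hcrit (i k : ℕ) (hik : i < k) (hD : 0 < esymDefect f i (k - 1)) :
      0 < esymDefect f i k ↔
        (((x i : ℚ) - 2) * ∏ j ∈ Icc i (k - 1), (x j : ℚ)) / esymDefect f i (k - 1) < x k := by
    simpa [f] using esymDefect_pos_iff_div_lt hik hD
  constructor
  · intro H i k hik hkm
    have hD : 0 < esymDefect f i (k - 1) := sub_pos.mpr (H i (k - 1) (by omega) (by omega))
    rw [← esymDefect_sub_one hik]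
    exact ⟨hD, (hcrit i k hik hD).mp (sub_pos.mpr (H i k hik.le hkm))⟩
  · intro H i k hik hkm
    rcases hik.eq_or_lt with rfl | hlt
    · exact sub_pos.mp (esymDefect_self.trans_gt two_pos)
    · obtain ⟨hD, hlt'⟩ := H i k hlt hkm
      rw [← esymDefect_sub_one hlt] at hD hlt'
      exact sub_pos.mp ((hcrit i k hlt hD).mpr hlt')

/-- indices shifted to be 0-based: for odd positive `x 0, …, x (m-1)`, the
inequalities `2·σ_{k−i}(x i,…,x k) > (x i)²·σ_{k−i−1}(x (i+1),…,x k)` for all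
`i ≤ k < m` hold iff for all `i < k < m` the denominator
`2·σ_{k−i−1}(x i,…,x (k-1)) − (x i)²·σ_{k−i−2}(x (i+1),…,x (k-1))` is positive and
`x k > (x i − 2)·(x i ⋯ x (k-1)) / (that denominator)` (over `ℚ`). -/
theorem stmt_7 (m : ℕ) (hm : 0 < m) (x : ℕ → ℕ)
    (hx : ∀ i < m, Odd (x i) ∧ 0 < x i) :
    (∀ i k : ℕ, i ≤ k → k < m →
        2 * esymZ (Finset.Icc i k) (fun j => (x j : ℤ)) ((k : ℤ) - i) >
          (x i : ℤ) ^ 2 * esymZ (Finset.Icc (i + 1) k) (fun j => (x j : ℤ)) ((k : ℤ) - i - 1)) ↔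
      (∀ i k : ℕ, i < k → k < m →
        0 < 2 * esymZ (Finset.Icc i (k - 1)) (fun j => (x j : ℤ)) ((k : ℤ) - i - 1) -
            (x i : ℤ) ^ 2 * esymZ (Finset.Icc (i + 1) (k - 1)) (fun j => (x j : ℤ)) ((k : ℤ) - i - 2) ∧
        (x k : ℚ) >
          (((x i : ℚ) - 2) * ∏ j ∈ Finset.Icc i (k - 1), (x j : ℚ)) /
            ((2 * esymZ (Finset.Icc i (k - 1)) (fun j => (x j : ℤ)) ((k : ℤ) - i - 1) -
              (x i : ℤ) ^ 2 * esymZ (Finset.Icc (i + 1) (k - 1)) (fun j => (x j : ℤ))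
                ((k : ℤ) - i - 2) : ℤ) : ℚ)) :=
  stmt_7_general m x
end

section
/- Let x_1 be an odd positive integer. A rational number q has odd greedy expansion of length 2 with first denominator x_1 if and only if q = ((x_1² + 3)/2 + 2t) / ((x_1³ + 3x_1)/2 − x_1² + 2x_1·t) for some nonnegative integer t; equivalently, q = 1/x_1 + 1/x_2 where x_2 = (x_1² + 3)/2 − x_1 + 2t. -/
lemma isOddGreedyStep_one_div_self_iff {b : ℕ} : IsOddGreedyStep (1 / b) b ↔ Odd b := by
  refine ⟨And.left, fun hb => ⟨hb, ?_⟩⟩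
  obtain rfl | hb3 : b = 1 ∨ 3 ≤ b := by obtain ⟨k, rfl⟩ := hb; omega
  · simp
  · refine .inr ⟨hb3, le_rfl, ?_⟩
    have : (3 : ℚ) ≤ b := by exact_mod_cast hb3
    gcongr <;> linarith

lemma isOddGreedyExpansion_two_iff {x : ℕ → ℕ} {q : ℚ} :
    IsOddGreedyExpansion 2 x q ↔
      q = 1 / x 0 + 1 / x 1 ∧ IsOddGreedyStep q (x 0) ∧ Odd (x 1) := by
  simp only [IsOddGreedyExpansion, Nat.forall_lt_succ_right, Nat.lt_one_iff, forall_eq,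
    Finset.sum_range_succ, Finset.sum_range_zero, zero_add, sub_zero]
  constructor
  · rintro ⟨hq, h0, h1⟩
    rw [hq, add_sub_cancel_left, isOddGreedyStep_one_div_self_iff] at h1
    exact ⟨hq, hq ▸ h0, h1⟩
  · rintro ⟨hq, h0, h1⟩
    refine ⟨hq, h0, ?_⟩
    rwa [hq, add_sub_cancel_left, isOddGreedyStep_one_div_self_iff]

lemma isOddGreedyStep_one_div_add_one_div_iff {a b : ℕ} (ha : Odd a) (hb : 0 < b) :
    IsOddGreedyStep (1 / a + 1 / b) a ↔ a ^ 2 < 2 * (a + b) := by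
  obtain rfl | ha3 : a = 1 ∨ 3 ≤ a := by obtain ⟨k, rfl⟩ := ha; omega
  · exact iff_of_true ⟨ha, .inl ⟨rfl, by simp⟩⟩ (by omega)
  have ha3' : (3 : ℚ) ≤ a := by exact_mod_cast ha3
  have hb' : (0 : ℚ) < b := by exact_mod_cast hb
  have hlow : (1 : ℚ) / a ≤ 1 / a + 1 / b := le_add_of_nonneg_right (by positivity)
  have hup : (1 : ℚ) / a + 1 / b < 1 / (a - 2) ↔ a ^ 2 < 2 * (a + b) := by
    rw [one_div_add_one_div (by positivity) hb'.ne', div_lt_div_iff₀ (by positivity) (by linarith),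
      ← Nat.cast_lt (α := ℚ)]
    push_cast
    constructor <;> intro <;> linarith
  rw [← hup]
  constructor
  · rintro ⟨-, ⟨rfl, -⟩ | ⟨-, -, h⟩⟩
    · omega
    · exact h
  · exact fun h => ⟨ha, .inr ⟨ha3, hlow, h⟩⟩

lemma odd_and_sq_lt_two_mul_add_iff (k b : ℕ) :
    Odd b ∧ (2 * k + 1) ^ 2 < 2 * (2 * k + 1 + b) ↔ ∃ t, b = 2 * k ^ 2 + 1 + 2 * t := by
  constructor
  · rintro ⟨⟨m, rfl⟩, h⟩
    have : k ^ 2 ≤ m := by nlinarith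
    exact ⟨m - k ^ 2, by omega⟩
  · rintro ⟨t, rfl⟩
    exact ⟨⟨k ^ 2 + t, by ring⟩, by nlinarith⟩

theorem stmt_9_general (x₁ : ℕ) (hodd : Odd x₁) (q : ℚ) :
    (∃ x₂ : ℕ, IsOddGreedyExpansion 2 (fun i => if i = 0 then x₁ else x₂) q) ↔
      ∃ t : ℕ, q = (((x₁ : ℚ) ^ 2 + 3) / 2 + 2 * t) /
          (((x₁ : ℚ) ^ 3 + 3 * x₁) / 2 - (x₁ : ℚ) ^ 2 + 2 * x₁ * t) ∧
        q = 1 / (x₁ : ℚ) + 1 / (((x₁ : ℚ) ^ 2 + 3) / 2 - x₁ + 2 * t) := by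
  obtain ⟨k, rfl⟩ := id hodd
  have hx₂ (t : ℕ) : (((2 * k + 1 : ℕ) : ℚ) ^ 2 + 3) / 2 - (2 * k + 1 : ℕ) + 2 * t =
      ((2 * k ^ 2 + 1 + 2 * t : ℕ) : ℚ) := by
    push_cast; ring
  have hfrac (t : ℕ) : ((((2 * k + 1 : ℕ) : ℚ) ^ 2 + 3) / 2 + 2 * t) /
      ((((2 * k + 1 : ℕ) : ℚ) ^ 3 + 3 * (2 * k + 1 : ℕ)) / 2 - ((2 * k + 1 : ℕ) : ℚ) ^ 2 +
        2 * (2 * k + 1 : ℕ) * t) =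
      1 / ((2 * k + 1 : ℕ) : ℚ) + 1 / ((2 * k ^ 2 + 1 + 2 * t : ℕ) : ℚ) := by
    rw [one_div_add_one_div (by positivity) (by positivity)]
    congr 1 <;> push_cast <;> ring
  simp only [isOddGreedyExpansion_two_iff, ↓reduceIte, one_ne_zero, hx₂, hfrac, and_self]
  constructor
  · rintro ⟨x₂, rfl, hstep, hodd₂⟩
    rw [isOddGreedyStep_one_div_add_one_div_iff hodd hodd₂.pos] at hstep
    obtain ⟨t, rfl⟩ := (odd_and_sq_lt_two_mul_add_iff k x₂).1 ⟨hodd₂, hstep⟩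
    exact ⟨t, rfl⟩
  · rintro ⟨t, rfl⟩
    obtain ⟨hodd₂, hlt⟩ := (odd_and_sq_lt_two_mul_add_iff k _).2 ⟨t, rfl⟩
    exact ⟨_, rfl, (isOddGreedyStep_one_div_add_one_div_iff hodd hodd₂.pos).2 hlt, hodd₂⟩

/-- for odd positive `x₁`, a rational `q` has odd greedy expansion of
length `2` with first denominator `x₁` iff
`q = ((x₁² + 3)/2 + 2t) / ((x₁³ + 3x₁)/2 − x₁² + 2x₁t)` for some `t ≥ 0`;
equivalently `q = 1/x₁ + 1/x₂` with `x₂ = (x₁² + 3)/2 − x₁ + 2t`. -/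
theorem stmt_9 (x₁ : ℕ) (hpos : 0 < x₁) (hodd : Odd x₁) (q : ℚ) :
    (∃ x₂ : ℕ, IsOddGreedyExpansion 2 (fun i => if i = 0 then x₁ else x₂) q) ↔
      ∃ t : ℕ, q = (((x₁ : ℚ) ^ 2 + 3) / 2 + 2 * t) /
          (((x₁ : ℚ) ^ 3 + 3 * x₁) / 2 - (x₁ : ℚ) ^ 2 + 2 * x₁ * t) ∧
        q = 1 / (x₁ : ℚ) + 1 / (((x₁ : ℚ) ^ 2 + 3) / 2 - x₁ + 2 * t) :=
  stmt_9_general x₁ hodd q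
end

section
/- Let x_1,...,x_m be positive integers (m ≥ 2), let y = gcd(σ_{m−1}(x_1,...,x_m), x_1⋯x_m), let p be a prime, and let V_p = max_{i∈[m−1]} v_p(x_i). Then v_p(y) ≥ v_p(x_1⋯x_{m−1}) − V_p and v_p(y) ≤ v_p(x_1⋯x_{m−1}) + V_p. -/
/-!
Write `a i = v_p(x i)`, `A = a 0 + ⋯ + a (m-2)` and `V = max_{i < m-1} a i`. Each term
`∏_{k ≠ i} x k` of `σ_{m-1}` has valuation `A + a (m-1) - a i`, which is at least `A - V`; so is
that of the full product, hence `p^(A - V)` divides the gcd. For the upper bound the gcd divides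
the full product, of valuation `A + a (m-1)`; this is at most `A + V` unless `a (m-1) > V`, and in
that case the term omitting `x (m-1)` is the unique term of least valuation `A`, so `σ_{m-1}` itself
has valuation `A`.
-/

open Finset

section
variable {ι : Type*} [DecidableEq ι] {s : Finset ι} {j : ι} {x : ι → ℕ} {p : ℕ}

theorem factorization_prod_erase_add (hx : ∀ i ∈ s, x i ≠ 0) {i : ι} (hi : i ∈ s) :
    (∏ k ∈ s.erase i, x k).factorization p + (x i).factorization p =
      (∏ k ∈ s, x k).factorization p := by
  rw [← Finsupp.add_apply, ← Nat.factorization_mul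
    (prod_ne_zero_iff.mpr fun k hk => hx k (mem_of_mem_erase hk)) (hx i hi), prod_erase_mul _ _ hi]

theorem factorization_sum_le_of_forall_lt (hp : p.Prime) {f : ι → ℕ} (hj : j ∈ s) (hfj : f j ≠ 0)
    (hlt : ∀ i ∈ s.erase j, (f j).factorization p < (f i).factorization p) :
    (∑ i ∈ s, f i).factorization p ≤ (f j).factorization p := by
  have hrest : p ^ ((f j).factorization p + 1) ∣ ∑ i ∈ s.erase j, f i :=
    dvd_sum fun i hi => (Nat.pow_dvd_pow p (hlt i hi)).trans (Nat.ordProj_dvd (f i) p)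
  have hsum : ∑ i ∈ s, f i ≠ 0 := fun h => hfj (sum_eq_zero_iff.mp h j hj)
  by_contra! h
  have hdvd : p ^ ((f j).factorization p + 1) ∣ ∑ i ∈ s, f i :=
    (hp.pow_dvd_iff_le_factorization hsum).mpr h
  rw [← add_sum_erase s f hj] at hdvd
  exact Nat.pow_succ_factorization_not_dvd hfj hp ((Nat.dvd_add_left hrest).mp hdvd)

theorem factorization_prod_insert (hj : j ∉ s) (hx : ∀ i ∈ insert j s, x i ≠ 0) :
    (∏ k ∈ insert j s, x k).factorization p =
      (∏ k ∈ s, x k).factorization p + (x j).factorization p := by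
  rw [prod_insert hj, mul_comm, Nat.factorization_mul
    (prod_ne_zero_iff.mpr fun k hk => hx k (mem_insert_of_mem hk)) (hx j (mem_insert_self j s))]
  rfl

theorem factorization_prod_insert_erase_add (hj : j ∉ s) (hx : ∀ i ∈ insert j s, x i ≠ 0)
    {i : ι} (hi : i ∈ insert j s) :
    (∏ k ∈ (insert j s).erase i, x k).factorization p + (x i).factorization p =
      (∏ k ∈ s, x k).factorization p + (x j).factorization p := by
  rw [factorization_prod_erase_add hx hi, factorization_prod_insert hj hx]

theorem factorization_prod_sub_sup_le_factorization_gcd (hp : p.Prime) (hj : j ∉ s)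
    (hx : ∀ i ∈ insert j s, x i ≠ 0) :
    (∏ i ∈ s, x i).factorization p - s.sup (fun i => (x i).factorization p) ≤
      (Nat.gcd (∑ i ∈ insert j s, ∏ k ∈ (insert j s).erase i, x k)
        (∏ i ∈ insert j s, x i)).factorization p := by
  set e := (∏ i ∈ s, x i).factorization p - s.sup (fun i => (x i).factorization p)
  have hterm : ∀ i ∈ insert j s, p ^ e ∣ ∏ k ∈ (insert j s).erase i, x k := fun i hi => by
    rw [hp.pow_dvd_iff_le_factorization
      (prod_ne_zero_iff.mpr fun k hk => hx k (mem_of_mem_erase hk))]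
    have hval := factorization_prod_insert_erase_add (p := p) hj hx hi
    rcases mem_insert.mp hi with rfl | hi
    · omega
    · have := le_sup (f := fun i => (x i).factorization p) hi
      omega
  have hprod : p ^ e ∣ ∏ i ∈ insert j s, x i :=
    (hterm j (mem_insert_self j s)).trans (Dvd.intro _ (prod_erase_mul _ _ (mem_insert_self j s)))
  exact (hp.pow_dvd_iff_le_factorization (Nat.gcd_ne_zero_right (prod_ne_zero_iff.mpr hx))).mp
    (Nat.dvd_gcd (dvd_sum hterm) hprod)

theorem factorization_gcd_le_factorization_prod_add_sup (hp : p.Prime) (hj : j ∉ s)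
    (hx : ∀ i ∈ insert j s, x i ≠ 0) :
    (Nat.gcd (∑ i ∈ insert j s, ∏ k ∈ (insert j s).erase i, x k)
        (∏ i ∈ insert j s, x i)).factorization p ≤
      (∏ i ∈ s, x i).factorization p + s.sup (fun i => (x i).factorization p) := by
  have hT : ∀ i, ∏ k ∈ (insert j s).erase i, x k ≠ 0 := fun i =>
    prod_ne_zero_iff.mpr fun k hk => hx k (mem_of_mem_erase hk)
  have hP : ∏ i ∈ insert j s, x i ≠ 0 := prod_ne_zero_iff.mpr hx
  have hS : ∑ i ∈ insert j s, ∏ k ∈ (insert j s).erase i, x k ≠ 0 :=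
    fun h => hT j (sum_eq_zero_iff.mp h j (mem_insert_self j s))
  have hg := Nat.gcd_ne_zero_right (m := ∑ i ∈ insert j s, ∏ k ∈ (insert j s).erase i, x k) hP
  have hgP := (Nat.factorization_le_iff_dvd hg hP).mpr (Nat.gcd_dvd_right _ _) p
  have hgS := (Nat.factorization_le_iff_dvd hg hS).mpr (Nat.gcd_dvd_left _ _) p
  rw [factorization_prod_insert hj hx] at hgP
  have hval := fun i (hi : i ∈ insert j s) => factorization_prod_insert_erase_add (p := p) hj hx hi
  have hTj := hval j (mem_insert_self j s)
  by_cases hxj : (x j).factorization p ≤ s.sup (fun i => (x i).factorization p)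
  · omega
  · have hSle := factorization_sum_le_of_forall_lt hp
      (f := fun i => ∏ k ∈ (insert j s).erase i, x k) (mem_insert_self j s) (hT j) fun i hi => by
        rw [erase_insert hj] at hi
        have := le_sup (f := fun i => (x i).factorization p) hi
        have := hval i (mem_insert_of_mem hi)
        omega
    omega

end

theorem stmt_13_general (m : ℕ) (x : ℕ → ℕ) (hx : ∀ i < m, 0 < x i)
    (p : ℕ) (hp : p.Prime) :
    ((∏ i ∈ Finset.range (m - 1), x i).factorization p : ℤ) -
        ((Finset.range (m - 1)).sup fun i => (x i).factorization p) ≤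
      ((Nat.gcd (∑ i ∈ Finset.range m, ∏ j ∈ (Finset.range m).erase i, x j)
          (∏ i ∈ Finset.range m, x i)).factorization p : ℤ) ∧
    ((Nat.gcd (∑ i ∈ Finset.range m, ∏ j ∈ (Finset.range m).erase i, x j)
        (∏ i ∈ Finset.range m, x i)).factorization p : ℤ) ≤
      ((∏ i ∈ Finset.range (m - 1), x i).factorization p : ℤ) +
        ((Finset.range (m - 1)).sup fun i => (x i).factorization p) := by
  rcases m with _ | n
  · simp
  have hx' : ∀ i ∈ insert n (range n), x i ≠ 0 := fun i hi =>
    (hx i (mem_range.mp (range_add_one ▸ hi))).ne'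
  rw [Nat.add_sub_cancel, range_add_one]
  have hlow := factorization_prod_sub_sup_le_factorization_gcd hp notMem_range_self hx'
  have hup := factorization_gcd_le_factorization_prod_add_sup hp notMem_range_self hx'
  omega

/-- with `y = gcd(σ_{m−1}(x), x 0 ⋯ x (m-1))` and
`V = max_{i < m-1} v_p(x i)`, one has
`v_p(x 0 ⋯ x (m-2)) − V ≤ v_p(y) ≤ v_p(x 0 ⋯ x (m-2)) + V`. -/
theorem stmt_13 (m : ℕ) (hm : 2 ≤ m) (x : ℕ → ℕ) (hx : ∀ i < m, 0 < x i)
    (p : ℕ) (hp : p.Prime) :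
    ((∏ i ∈ Finset.range (m - 1), x i).factorization p : ℤ) -
        ((Finset.range (m - 1)).sup fun i => (x i).factorization p) ≤
      ((Nat.gcd (∑ i ∈ Finset.range m, ∏ j ∈ (Finset.range m).erase i, x j)
          (∏ i ∈ Finset.range m, x i)).factorization p : ℤ) ∧
    ((Nat.gcd (∑ i ∈ Finset.range m, ∏ j ∈ (Finset.range m).erase i, x j)
        (∏ i ∈ Finset.range m, x i)).factorization p : ℤ) ≤
      ((∏ i ∈ Finset.range (m - 1), x i).factorization p : ℤ) +
        ((Finset.range (m - 1)).sup fun i => (x i).factorization p) :=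
  stmt_13_general m x hx p hp
end

section
/- Let i, k, t be positive integers with i ≤ k − 2, and let x_i,...,x_{k−1} be odd positive integers such that both D := 2·σ_{k−i−1}(x_i,...,x_{k−1}) − x_i²·σ_{k−i−2}(x_{i+1},...,x_{k−1}) and D' := 2·σ_{k−i−1}(x_i,...,x_{k−2}, x_{k−1}+2t) − x_i²·σ_{k−i−2}(x_{i+1},...,x_{k−2}, x_{k−1}+2t) are positive. Then (x_i − 2)·x_i⋯x_{k−1} / D > (x_i − 2)·x_i⋯x_{k−2}·(x_{k−1}+2t) / D', i.e. increasing the last variable by 2t strictly decreases the bound. Moreover, the difference of cross products equals 2t·(x_i − 2)²·(x_i⋯x_{k−2})². -/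
/-!
Both denominators are affine in the last variable `y`: at `y = 0` only the top-degree products
survive, so the constant term is `2·x_i⋯x_{k-2} − x_i²·x_{i+1}⋯x_{k-2} = −(x_i − 2)·x_i⋯x_{k-2}`.
The numerators are `(x_i − 2)·x_i⋯x_{k-2}·y`, so in the difference of cross products the
`y`-linear parts cancel, leaving `(x_i − 2)²(x_i⋯x_{k-2})²` times the increment `2t` of `y`, which
is positive because `x_i` is odd.
-/

/-- The elementary symmetric polynomial of degree `d` in the variables `f j`, `j ∈ s`. -/
def esymN (s : Finset ℕ) (f : ℕ → ℤ) (d : ℕ) : ℤ :=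
  ∑ u ∈ s.powersetCard d, ∏ j ∈ u, f j

open Finset Function

lemma esymN_card (s : Finset ℕ) (f : ℕ → ℤ) : esymN s f #s = ∏ j ∈ s, f j := by
  simp [esymN, powersetCard_self]

lemma esymN_congr {s : Finset ℕ} {f g : ℕ → ℤ} (h : ∀ j ∈ s, f j = g j) (d : ℕ) :
    esymN s f d = esymN s g d :=
  sum_congr rfl fun _ hu => prod_congr rfl fun _ hj => h _ ((mem_powersetCard.mp hu).1 hj)

lemma esymN_update_of_notMem {a : ℕ} {s : Finset ℕ} (ha : a ∉ s) (f : ℕ → ℤ) (y : ℤ) (d : ℕ) :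
    esymN s (update f a y) d = esymN s f d :=
  esymN_congr (fun _ hj => update_of_ne (ne_of_mem_of_not_mem hj ha) _ _) d

lemma esymN_insert {a : ℕ} {s : Finset ℕ} (ha : a ∉ s) (f : ℕ → ℤ) (d : ℕ) :
    esymN (insert a s) f (d + 1) = esymN s f (d + 1) + f a * esymN s f d := by
  have hnot : ∀ u ∈ s.powersetCard d, a ∉ u := fun u hu hau => ha ((mem_powersetCard.mp hu).1 hau)
  unfold esymN
  rw [powersetCard_succ_insert ha, sum_union, sum_image, mul_sum]
  · exact congrArg _ (sum_congr rfl fun u hu => prod_insert (hnot u hu))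
  · intro u hu v hv huv
    rw [← erase_insert (hnot u hu), ← erase_insert (hnot v hv), huv]
  · refine disjoint_left.mpr fun u hu hu' => ?_
    obtain ⟨v, -, rfl⟩ := mem_image.mp hu'
    exact ha ((mem_powersetCard.mp hu).1 (mem_insert_self a v))

lemma esymN_insert_update_affine {a : ℕ} {s : Finset ℕ} (ha : a ∉ s) (f : ℕ → ℤ) (d : ℕ) :
    ∃ β, ∀ y, esymN (insert a s) (update f a y) d = esymN s f d + y * β := by
  cases d with
  | zero => exact ⟨0, fun y => by simp [esymN]⟩
  | succ d =>
    refine ⟨esymN s f d, fun y => ?_⟩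
    rw [esymN_insert ha, esymN_update_of_notMem ha, esymN_update_of_notMem ha, update_self]

lemma bound_denom_affine {a b : ℕ} {s : Finset ℕ} (hb : b ∉ s) (ha : a ∉ insert b s)
    (f : ℕ → ℤ) :
    ∃ γ, ∀ y, 2 * esymN (insert a (insert b s)) (update f a y) (#s + 1) -
        f b ^ 2 * esymN (insert a s) (update f a y) #s =
      -((f b - 2) * ∏ j ∈ insert b s, f j) + y * γ := by
  obtain ⟨β₁, h₁⟩ := esymN_insert_update_affine ha f (#s + 1)
  obtain ⟨β₂, h₂⟩ := esymN_insert_update_affine (fun h => ha (mem_insert_of_mem h)) f #s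
  refine ⟨2 * β₁ - f b ^ 2 * β₂, fun y => ?_⟩
  rw [h₁, h₂, ← card_insert_of_notMem hb, esymN_card, esymN_card, prod_insert hb]
  ring

lemma bound_cross_mul_sub (f : ℕ → ℤ) (y : ℤ) (i k : ℕ) (hik : i + 2 ≤ k) :
    ((f i - 2) * ∏ j ∈ Icc i (k - 1), f j) *
        (2 * esymN (Icc i (k - 1)) (update f (k - 1) y) (k - i - 1) -
          f i ^ 2 * esymN (Icc (i + 1) (k - 1)) (update f (k - 1) y) (k - i - 2)) -
      ((f i - 2) * (∏ j ∈ Icc i (k - 2), f j) * y) *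
        (2 * esymN (Icc i (k - 1)) f (k - i - 1) -
          f i ^ 2 * esymN (Icc (i + 1) (k - 1)) f (k - i - 2)) =
      (y - f (k - 1)) * (f i - 2) ^ 2 * (∏ j ∈ Icc i (k - 2), f j) ^ 2 := by
  obtain ⟨n, rfl⟩ : ∃ n, k = i + n + 2 := ⟨k - i - 2, by omega⟩
  have hs : Icc i (i + n) = insert i (Icc (i + 1) (i + n)) := by
    ext j; simp only [mem_Icc, mem_insert]; omega
  have hs₁ : Icc i (i + n + 1) = insert (i + n + 1) (Icc i (i + n)) := by
    ext j; simp only [mem_Icc, mem_insert]; omega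
  have hs₂ : Icc (i + 1) (i + n + 1) = insert (i + n + 1) (Icc (i + 1) (i + n)) := by
    ext j; simp only [mem_Icc, mem_insert]; omega
  have hcard : #(Icc (i + 1) (i + n)) = n := by simp
  simp only [show i + n + 2 - 1 = i + n + 1 by omega, show i + n + 2 - 2 = i + n by omega,
    show i + n + 2 - i - 1 = n + 1 by omega, show i + n + 2 - i - 2 = n by omega]
  obtain ⟨γ, hγ⟩ := bound_denom_affine (a := i + n + 1) (b := i) (s := Icc (i + 1) (i + n))
    (by simp) (by simp only [mem_insert, mem_Icc]; omega) f
  have hγ_self := hγ (f (i + n + 1))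
  rw [update_eq_self] at hγ_self
  rw [hcard, ← hs] at hγ hγ_self
  rw [hs₁, hs₂, prod_insert (by simp), hγ, hγ_self]
  ring

/-- indices shifted to be 0-based: replacing the last variable
`x (k-1)` by `x (k-1) + 2t` strictly decreases the bound
`(x i − 2)·x i ⋯ x (k-1) / (2σ_{k−i−1}(x i,…,x (k-1)) − (x i)²σ_{k−i−2}(x (i+1),…,x (k-1)))`,
provided both denominators are positive; moreover the difference of cross products
is `2t·(x i − 2)²·(x i ⋯ x (k-2))²`. -/
theorem stmt_17 (i k t : ℕ) (ht : 0 < t) (hik : i ≤ k - 2) (hk : 2 ≤ k)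
    (x : ℕ → ℕ) (hx : ∀ j, i ≤ j → j ≤ k - 1 → Odd (x j) ∧ 0 < x j)
    (hD : 0 < 2 * esymN (Finset.Icc i (k - 1)) (fun j => (x j : ℤ)) (k - i - 1) -
      (x i : ℤ) ^ 2 * esymN (Finset.Icc (i + 1) (k - 1)) (fun j => (x j : ℤ)) (k - i - 2))
    (hD' : 0 < 2 * esymN (Finset.Icc i (k - 1))
        (Function.update (fun j => (x j : ℤ)) (k - 1) ((x (k - 1) : ℤ) + 2 * t)) (k - i - 1) -
      (x i : ℤ) ^ 2 * esymN (Finset.Icc (i + 1) (k - 1))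
        (Function.update (fun j => (x j : ℤ)) (k - 1) ((x (k - 1) : ℤ) + 2 * t)) (k - i - 2)) :
    ((((x i : ℚ) - 2) * ∏ j ∈ Finset.Icc i (k - 1), (x j : ℚ)) /
        ((2 * esymN (Finset.Icc i (k - 1)) (fun j => (x j : ℤ)) (k - i - 1) -
          (x i : ℤ) ^ 2 * esymN (Finset.Icc (i + 1) (k - 1)) (fun j => (x j : ℤ))
            (k - i - 2) : ℤ) : ℚ) >
      (((x i : ℚ) - 2) * (∏ j ∈ Finset.Icc i (k - 2), (x j : ℚ)) * ((x (k - 1) : ℚ) + 2 * t)) /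
        ((2 * esymN (Finset.Icc i (k - 1))
            (Function.update (fun j => (x j : ℤ)) (k - 1) ((x (k - 1) : ℤ) + 2 * t)) (k - i - 1) -
          (x i : ℤ) ^ 2 * esymN (Finset.Icc (i + 1) (k - 1))
            (Function.update (fun j => (x j : ℤ)) (k - 1) ((x (k - 1) : ℤ) + 2 * t))
            (k - i - 2) : ℤ) : ℚ)) ∧
    (((x i : ℤ) - 2) * (∏ j ∈ Finset.Icc i (k - 1), (x j : ℤ))) *
        (2 * esymN (Finset.Icc i (k - 1))
            (Function.update (fun j => (x j : ℤ)) (k - 1) ((x (k - 1) : ℤ) + 2 * t)) (k - i - 1) -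
          (x i : ℤ) ^ 2 * esymN (Finset.Icc (i + 1) (k - 1))
            (Function.update (fun j => (x j : ℤ)) (k - 1) ((x (k - 1) : ℤ) + 2 * t)) (k - i - 2)) -
      (((x i : ℤ) - 2) * (∏ j ∈ Finset.Icc i (k - 2), (x j : ℤ)) * ((x (k - 1) : ℤ) + 2 * t)) *
        (2 * esymN (Finset.Icc i (k - 1)) (fun j => (x j : ℤ)) (k - i - 1) -
          (x i : ℤ) ^ 2 * esymN (Finset.Icc (i + 1) (k - 1)) (fun j => (x j : ℤ)) (k - i - 2)) =
      2 * t * ((x i : ℤ) - 2) ^ 2 * (∏ j ∈ Finset.Icc i (k - 2), (x j : ℤ)) ^ 2 := by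
  have key := bound_cross_mul_sub (fun j => (x j : ℤ)) ((x (k - 1) : ℤ) + 2 * t) i k (by omega)
  rw [add_sub_cancel_left] at key
  refine ⟨?_, key⟩
  have hxi : (x i : ℤ) - 2 ≠ 0 := by
    obtain ⟨c, hc⟩ := (hx i le_rfl (by omega)).1
    omega
  have hprod : 0 < ∏ j ∈ Icc i (k - 2), (x j : ℤ) :=
    prod_pos fun j hj => by exact_mod_cast (hx j (mem_Icc.mp hj).1 (by grind)).2
  have hcross := key ▸ (by positivity : 0 < 2 * (t : ℤ) * ((x i : ℤ) - 2) ^ 2 *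
    (∏ j ∈ Icc i (k - 2), (x j : ℤ)) ^ 2)
  rw [gt_iff_lt, div_lt_div_iff₀ (by exact_mod_cast hD') (by exact_mod_cast hD)]
  exact_mod_cast sub_pos.mp hcross
end

section
/- Let x_1 ≥ 3 be an odd positive integer, let b = (x_1² + 3)/2 − x_1, and let c_2 be a nonnegative integer with (b² + 3)/2 − b + 2c_2 > (x_1 − 2)·x_1·b / (2(x_1 + b) − x_1²). Then for all nonnegative integers t_1, t_2, setting x_2 = b + 2t_1 and x_3 = (x_2² + 3)/2 − x_2 + 2c_2 + 2t_2, the integers x_1, x_2, x_3 are odd and satisfy 2(x_1 + x_2) > x_1², 2(x_2 + x_3) > x_2², and 2(x_1x_2 + x_1x_3 + x_2x_3) > x_1²(x_2 + x_3). -/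
/-- let `x₁ ≥ 3` be odd, `b = (x₁² + 3)/2 − x₁`, and `c₂ ≥ 0` with
`(b² + 3)/2 − b + 2c₂ > (x₁ − 2)·x₁·b / (2(x₁ + b) − x₁²)`. Then for all `t₁, t₂ ≥ 0`,
with `x₂ = b + 2t₁` and `x₃ = (x₂² + 3)/2 − x₂ + 2c₂ + 2t₂`, the integers `x₁, x₂, x₃`
are odd and satisfy `2(x₁+x₂) > x₁²`, `2(x₂+x₃) > x₂²`, and
`2(x₁x₂ + x₁x₃ + x₂x₃) > x₁²(x₂+x₃)`. -/
theorem stmt_19 (x₁ b c₂ : ℤ) (hx₁ : 3 ≤ x₁) (hodd : Odd x₁)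
    (hb : b = (x₁ ^ 2 + 3) / 2 - x₁) (hc₂ : 0 ≤ c₂)
    (hc : (((b ^ 2 + 3) / 2 - b + 2 * c₂ : ℤ) : ℚ) >
      (((x₁ - 2) * x₁ * b : ℤ) : ℚ) / ((2 * (x₁ + b) - x₁ ^ 2 : ℤ) : ℚ))
    (t₁ t₂ x₂ x₃ : ℤ) (ht₁ : 0 ≤ t₁) (ht₂ : 0 ≤ t₂)
    (hx₂ : x₂ = b + 2 * t₁) (hx₃ : x₃ = (x₂ ^ 2 + 3) / 2 - x₂ + 2 * c₂ + 2 * t₂) :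
    Odd x₁ ∧ Odd x₂ ∧ Odd x₃ ∧
      2 * (x₁ + x₂) > x₁ ^ 2 ∧
      2 * (x₂ + x₃) > x₂ ^ 2 ∧
      2 * (x₁ * x₂ + x₁ * x₃ + x₂ * x₃) > x₁ ^ 2 * (x₂ + x₃) := by
  obtain ⟨k, hk⟩ := hodd
  have hk1 : 1 ≤ k := by omega
  -- explicit value of b
  have hb' : b = 2 * k ^ 2 + 1 := by
    rw [hb, hk, show (2 * k + 1) ^ 2 + 3 = 2 * (2 * k ^ 2 + 2 * k + 2) by ring,
      Int.mul_ediv_cancel_left _ (by norm_num)]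
    ring
  -- explicit value of x₂
  have hx₂' : x₂ = 2 * (k ^ 2 + t₁) + 1 := by rw [hx₂, hb']; ring
  -- explicit value of x₃
  have hx₃' : x₃ = 2 * (k ^ 2 + t₁) ^ 2 + 1 + 2 * c₂ + 2 * t₂ := by
    rw [hx₃, hx₂',
      show (2 * (k ^ 2 + t₁) + 1) ^ 2 + 3
        = 2 * (2 * (k ^ 2 + t₁) ^ 2 + 2 * (k ^ 2 + t₁) + 2) by ring,
      Int.mul_ediv_cancel_left _ (by norm_num)]
    ring
  -- translate hc to an integer inequality
  have hA : ((b ^ 2 + 3) / 2 - b + 2 * c₂ : ℤ) = 2 * k ^ 4 + 1 + 2 * c₂ := by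
    rw [hb', show (2 * k ^ 2 + 1) ^ 2 + 3 = 2 * (2 * k ^ 4 + 2 * k ^ 2 + 2) by ring,
      Int.mul_ediv_cancel_left _ (by norm_num)]
    ring
  have hden : (2 * (x₁ + b) - x₁ ^ 2 : ℤ) = 3 := by rw [hk, hb']; ring
  rw [hA, hden] at hc
  have hcz : (x₁ - 2) * x₁ * b < 3 * (2 * k ^ 4 + 1 + 2 * c₂) := by
    have h := (div_lt_iff₀ (by norm_num : (0:ℚ) < ((3:ℤ):ℚ))).mp hc
    have h2 : (((x₁ - 2) * x₁ * b : ℤ) : ℚ) < ((3 * (2 * k ^ 4 + 1 + 2 * c₂) : ℤ) : ℚ) := by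
      push_cast at h ⊢; linarith
    exact_mod_cast h2
  rw [hk, hb'] at hcz
  refine ⟨⟨k, hk⟩, ⟨k ^ 2 + t₁, by linarith [hx₂']⟩,
    ⟨(k ^ 2 + t₁) ^ 2 + c₂ + t₂, by rw [hx₃']; ring⟩, ?_, ?_, ?_⟩
  · rw [hk, hx₂']; nlinarith
  · rw [hx₂', hx₃']; nlinarith [sq_nonneg (k ^ 2 + t₁)]
  · rw [hk, hx₂', hx₃']
    nlinarith [mul_nonneg ht₁ hc₂, mul_nonneg ht₁ ht₂, mul_nonneg ht₁ ht₁,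
      mul_nonneg (mul_nonneg ht₁ ht₁) (sq_nonneg k), mul_nonneg ht₁ (sq_nonneg k),
      mul_nonneg ht₁ (mul_nonneg (sq_nonneg k) (sq_nonneg k)), sq_nonneg k, hk1,
      mul_le_mul_of_nonneg_left (sq_nonneg k) ht₁]
end
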